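/- Suppose W ≡_RK ∑_U U_α where U and all U_α are p-point ultrafilters over a cardinal κ with κ^{<κ} = κ. Then W satisfies the Galvin property Gal(W, κ, κ⁺). -/

import Mathlib

open Cardinal Set

universe u v

/-- `W` is a `κ`-complete ultrafilter. -/
def CComplete {β : Type u} (κ : Cardinal.{0}) (W : Ultrafilter β) : Prop :=
  ∀ (ι : Type) (f : ι → Set β), #ι < κ → (∀ i, f i ∈ W) → (⋂ i, f i) ∈ W

/-- `W` is a p-point ultrafilter: every function which is not constant mod `W` is
almost one-to-one mod `W` (preimages of initial segments are bounded on a set in `W`). -/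
def IsPPoint {β : Type u} [LinearOrder β] (W : Ultrafilter β) : Prop :=
  ∀ f : β → β, (¬ ∃ c, {x | f x = c} ∈ W) →
    ∃ X ∈ W, ∀ γ : β, ∃ b : β, ∀ x ∈ X, f x < γ → x ≤ b

/-- The `U`-sum `∑_U U_α` of the ultrafilters `Us α`. -/
def sumUf {α : Type u} {β : Type v} (U : Ultrafilter α) (Us : α → Ultrafilter β) :
    Ultrafilter (α × β) :=
  U.bind fun a => (Us a).map (Prod.mk a)

/-- The Rudin–Keisler order: `U ≤_RK W` iff `U` is the image of `W` under some map. -/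
def RKle {α : Type u} {β : Type v} (U : Ultrafilter α) (W : Ultrafilter β) : Prop :=
  ∃ g : β → α, U = W.map g

/-- Rudin–Keisler equivalence. -/
def RKequiv {α : Type u} {β : Type v} (U : Ultrafilter α) (W : Ultrafilter β) : Prop :=
  RKle U W ∧ RKle W U

/-- The Galvin property `Gal(W, κ, lam)`. -/
def Gal {β : Type u} (W : Ultrafilter β) (κ lam : Cardinal.{0}) : Prop :=
  ∀ A : lam.ord.ToType → Set β, (∀ i, A i ∈ W) →
    ∃ I : Set lam.ord.ToType, #I = κ ∧ (⋂ i ∈ I, A i) ∈ W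


section basics
variable {κ : Cardinal.{0}}

lemma reg_of_powerlt (hκ : ℵ₀ < κ) (hpow : κ ^< κ = κ) : κ.IsRegular := by
  constructor
  · exact hκ.le
  by_contra h
  push_neg at h
  have hcof : (Ordinal.cof κ.ord) < κ := h
  have h1 : κ < κ ^ (Ordinal.cof κ.ord) := Cardinal.lt_power_cof hκ.le
  have h2 : κ ^ (Ordinal.cof κ.ord) ≤ κ ^< κ := Cardinal.le_powerlt κ hcof
  rw [hpow] at h2
  exact absurd (h1.trans_le h2) (lt_irrefl κ)

lemma two_pow_le (hκ : ℵ₀ < κ) (hpow : κ ^< κ = κ) {δ : Cardinal.{0}} (hδ : δ < κ) :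
    (2 : Cardinal) ^ δ ≤ κ := by
  calc (2:Cardinal) ^ δ ≤ κ ^ δ :=
        Cardinal.power_le_power_right (by
          have := hκ.le; exact le_trans (le_of_lt (Cardinal.nat_lt_aleph0 2)) this)
    _ ≤ κ ^< κ := Cardinal.le_powerlt κ hδ
    _ = κ := hpow

-- basic facts about β := κ.ord.ToType
lemma mk_Iic_lt (hκ : ℵ₀ < κ) (x : κ.ord.ToType) : #(Iic x) < κ := by
  have h1 : (Iic x : Set κ.ord.ToType) ⊆ insert x (Iio x) := by
    intro y hy
    rcases eq_or_lt_of_le (mem_Iic.1 hy) with h | h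
    · exact Or.inl h
    · exact Or.inr h
  calc #(Iic x) ≤ #(insert x (Iio x) : Set κ.ord.ToType) := Cardinal.mk_le_mk_of_subset h1
    _ ≤ #(Iio x) + 1 := Cardinal.mk_insert_le
    _ < κ := Cardinal.add_lt_of_lt hκ.le (Cardinal.mk_Iio_ord_toType x) (lt_trans one_lt_aleph0 hκ)

lemma bddOf (hκ : ℵ₀ < κ) (hreg : κ.IsRegular) (s : Set κ.ord.ToType) (hs : #s < κ) :
    ∃ b, ∀ x ∈ s, x ≤ b := by
  by_contra h
  push_neg at h
  have hcov : (univ : Set κ.ord.ToType) ⊆ ⋃ x : s, Iic (x : κ.ord.ToType) := by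
    intro b _
    obtain ⟨x, hx, hbx⟩ := h b
    exact mem_iUnion.2 ⟨⟨x, hx⟩, le_of_lt hbx⟩
  have h1 : κ ≤ #(⋃ x : s, Iic (x : κ.ord.ToType)) := by
    calc κ = #(κ.ord.ToType) := (Cardinal.mk_ord_toType κ).symm
      _ = #(univ : Set κ.ord.ToType) := Cardinal.mk_univ.symm
      _ ≤ _ := Cardinal.mk_le_mk_of_subset hcov
  have h2 : #(⋃ x : s, Iic (x : κ.ord.ToType)) < κ := by
    refine lt_of_le_of_lt Cardinal.mk_iUnion_le_sum_mk ?_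
    exact Cardinal.sum_lt_of_isRegular hreg hs (fun i => mk_Iic_lt hκ i.1)
  exact absurd (h1.trans_lt h2) (lt_irrefl κ)

lemma noMax (hκ : ℵ₀ < κ) (b : κ.ord.ToType) : ∃ x, b < x := by
  by_contra h
  push_neg at h
  have : (univ : Set κ.ord.ToType) ⊆ Iic b := fun x _ => h x
  have h1 : κ ≤ #(Iic b) := by
    calc κ = #(univ : Set κ.ord.ToType) := by rw [Cardinal.mk_univ, Cardinal.mk_ord_toType]
      _ ≤ _ := Cardinal.mk_le_mk_of_subset this
  exact absurd (h1.trans_lt (mk_Iic_lt hκ b)) (lt_irrefl κ)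

end basics

section null
variable {κ : Cardinal.{0}}

-- complement of a small set is in a κ-complete nonprincipal ultrafilter
lemma nullOfSmall {V : Ultrafilter κ.ord.ToType} (hcc : CComplete κ V)
    (hnp : ∀ x, V ≠ (pure x : Ultrafilter _)) (s : Set κ.ord.ToType) (hs : #s < κ) :
    sᶜ ∈ V := by
  have h1 : ∀ x : κ.ord.ToType, ({x}ᶜ : Set κ.ord.ToType) ∈ V := by
    intro x
    rw [Ultrafilter.compl_mem_iff_notMem]
    intro hx
    apply hnp x
    apply Ultrafilter.coe_injective
    rw [Ultrafilter.coe_pure]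
    exact (Ultrafilter.neBot V).eq_pure_iff.2 hx
  have h2 : (⋂ x : s, ({(x : κ.ord.ToType)}ᶜ : Set κ.ord.ToType)) ∈ V :=
    hcc s (fun x => {(x : κ.ord.ToType)}ᶜ) hs (fun x => h1 x)
  have h3 : (⋂ x : s, ({(x : κ.ord.ToType)}ᶜ : Set κ.ord.ToType)) = sᶜ := by
    ext y
    simp only [mem_iInter, mem_compl_iff, mem_singleton_iff]
    constructor
    · intro h hy; exact h ⟨y, hy⟩ rfl
    · rintro h ⟨x, hx⟩ rfl; exact h hx
  rwa [h3] at h2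

end null

section wo
variable {κ : Cardinal.{0}}

noncomputable def wfmin (S : Set κ.ord.ToType) (hS : S.Nonempty) : κ.ord.ToType :=
  (IsWellFounded.wf (r := ((· < ·) : κ.ord.ToType → κ.ord.ToType → Prop))).min S hS

lemma wfmin_mem (S : Set κ.ord.ToType) (hS : S.Nonempty) : wfmin S hS ∈ S :=
  WellFounded.min_mem _ S hS

lemma wfmin_le (S : Set κ.ord.ToType) (hS : S.Nonempty) {x} (hx : x ∈ S) : wfmin S hS ≤ x :=
  le_of_not_gt (WellFounded.not_lt_min _ S hx)

noncomputable def succb (hκ : ℵ₀ < κ) (b : κ.ord.ToType) : κ.ord.ToType :=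
  wfmin {x | b < x} (by obtain ⟨x, hx⟩ := noMax hκ b; exact ⟨x, hx⟩)

lemma lt_succb (hκ : ℵ₀ < κ) (b : κ.ord.ToType) : b < succb hκ b :=
  wfmin_mem _ _

lemma succb_le (hκ : ℵ₀ < κ) {b c : κ.ord.ToType} (h : b < c) : succb hκ b ≤ c :=
  wfmin_le _ _ h

lemma succb_strictMono (hκ : ℵ₀ < κ) : StrictMono (succb hκ) := by
  intro a b hab
  exact lt_of_le_of_lt (succb_le hκ hab) (lt_succb hκ b)

end wo
section ppl
variable {κ : Cardinal.{0}}

-- pseudo-intersection lemma for p-points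
lemma ppL (hκ : ℵ₀ < κ) {V : Ultrafilter κ.ord.ToType}
    (hpp : IsPPoint V) (hnp : ∀ x, V ≠ (pure x : Ultrafilter _))
    (D : κ.ord.ToType → Set κ.ord.ToType) (hD : ∀ ξ, D ξ ∈ V) :
    ∃ X ∈ V, ∃ u : κ.ord.ToType → κ.ord.ToType,
      ∀ ξ, ∀ x ∈ X, x ∉ D ξ → x ≤ u ξ := by
  classical
  set Z : Set κ.ord.ToType := {x | ∀ ξ, x ∈ D ξ} with hZdef
  by_cases hZ : Z ∈ V
  · exact ⟨Z, hZ, id, fun ξ x hx hxD => absurd (hx ξ) hxD⟩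
  · have hZc : Zᶜ ∈ V := Ultrafilter.compl_mem_iff_notMem.2 hZ
    set f : κ.ord.ToType → κ.ord.ToType := fun x =>
      if h : ∃ ξ, x ∉ D ξ then wfmin {ξ | x ∉ D ξ} h else x with hfdef
    have hfmem : ∀ x (h : ∃ ξ, x ∉ D ξ), x ∉ D (f x) := by
      intro x h
      simp only [hfdef, dif_pos h]
      exact wfmin_mem _ h
    have hfle : ∀ x (_ : ∃ ξ, x ∉ D ξ) {ξ}, x ∉ D ξ → f x ≤ ξ := by
      intro x h ξ hξ
      simp only [hfdef, dif_pos h]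
      exact wfmin_le _ h hξ
    have hnc : ¬ ∃ c, {x | f x = c} ∈ V := by
      rintro ⟨c, hc⟩
      have h1 : (D c ∩ Zᶜ) ∈ V := Filter.inter_mem (hD c) hZc
      have h2 : ({x | f x = c} ∩ (D c ∩ Zᶜ)) ∈ V := Filter.inter_mem hc h1
      obtain ⟨x, hfx, hxD, hxZ⟩ := Ultrafilter.nonempty_of_mem h2
      have hex : ∃ ξ, x ∉ D ξ := by
        by_contra hno
        push_neg at hno
        exact hxZ hno
      have := hfmem x hex
      rw [hfx] at this
      exact this hxD
    obtain ⟨X', hX', hbd⟩ := hpp f hnc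
    choose b hb using hbd
    refine ⟨X' ∩ Zᶜ, Filter.inter_mem hX' hZc, fun ξ => b (succb hκ ξ), ?_⟩
    rintro ξ x ⟨hx1, hx2⟩ hxD
    have hex : ∃ ξ', x ∉ D ξ' := ⟨ξ, hxD⟩
    have h1 : f x ≤ ξ := hfle x hex hxD
    exact hb (succb hκ ξ) x hx1 (lt_of_le_of_lt h1 (lt_succb hκ ξ))

end ppl
section sdr
variable {κ : Cardinal.{0}}

lemma diffNonempty {ι : Type} {K R : Set ι} (h : #R < #K) : (K \ R).Nonempty := by
  rw [Set.nonempty_iff_ne_empty]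
  intro hemp
  have : K ⊆ R := by
    intro x hx
    by_contra hxR
    exact absurd hemp (Set.nonempty_iff_ne_empty.1 ⟨x, hx, hxR⟩)
  exact absurd (Cardinal.mk_le_mk_of_subset this) (not_le.2 h)

lemma sdr (hκ : ℵ₀ < κ) {ι : Type} (K : κ.ord.ToType → Set ι)
    (hK : ∀ ξ, κ < #(K ξ)) :
    ∃ i : κ.ord.ToType → ι, (∀ ξ, i ξ ∈ K ξ) ∧ Function.Injective i := by
  classical
  have wf : WellFounded ((· < ·) : κ.ord.ToType → κ.ord.ToType → Prop) :=
    IsWellFounded.wf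
  have hne : ∀ (ξ : κ.ord.ToType) (R : Set ι), #R < κ → (K ξ \ R).Nonempty := by
    intro ξ R hR
    exact diffNonempty (hR.trans (hK ξ))
  have hRsmall : ∀ (ξ : κ.ord.ToType) (g : ∀ η, η < ξ → ι),
      #(range fun p : {η // η < ξ} => g p.1 p.2) < κ := by
    intro ξ g
    calc #(range fun p : {η // η < ξ} => g p.1 p.2) ≤ #{η // η < ξ} := Cardinal.mk_range_le
      _ = #(Iio ξ) := by rfl
      _ < κ := Cardinal.mk_Iio_ord_toType ξ
  set i : κ.ord.ToType → ι := wf.fix (fun ξ g =>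
    (hne ξ (range fun p : {η // η < ξ} => g p.1 p.2) (hRsmall ξ g)).some) with hidef
  have hieq : ∀ ξ, i ξ =
      (hne ξ (range fun p : {η // η < ξ} => i p.1) (hRsmall ξ (fun η _ => i η))).some := by
    intro ξ
    rw [hidef]
    rw [WellFounded.fix_eq]
  have hmem : ∀ ξ, i ξ ∈ K ξ \ (range fun p : {η // η < ξ} => i p.1) := by
    intro ξ
    rw [hieq ξ]
    exact Set.Nonempty.some_mem _
  refine ⟨i, fun ξ => (hmem ξ).1, ?_⟩
  intro a b hab
  rcases lt_trichotomy a b with h | h | h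
  · exact absurd ⟨⟨a, h⟩, show i a = i b from hab⟩ (fun hc => (hmem b).2 hc)
  · exact h
  · exact absurd ⟨⟨b, h⟩, show i b = i a from hab.symm⟩ (fun hc => (hmem a).2 hc)

end sdr
section closure
variable {κ : Cardinal.{0}}

lemma existsC (hκ : ℵ₀ < κ) (hreg : κ.IsRegular) (m : κ.ord.ToType → κ.ord.ToType) :
    ∃ c : κ.ord.ToType → κ.ord.ToType,
      (∀ {η' η}, η' < η → c η' < c η) ∧
      (∀ {η' η ζ}, η' < η → ζ ≤ c η' → m ζ < c η) ∧
      (∀ η γ, (∀ η', η' < η → c η' < γ ∧ ∀ ζ ≤ c η', m ζ < γ) → c η ≤ γ) := by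
  classical
  have wf : WellFounded ((· < ·) : κ.ord.ToType → κ.ord.ToType → Prop) :=
    IsWellFounded.wf
  have hne : ∀ (η : κ.ord.ToType) (g : ∀ η', η' < η → κ.ord.ToType),
      {γ | ∀ η' (h : η' < η), g η' h < γ ∧ ∀ ζ ≤ g η' h, m ζ < γ}.Nonempty := by
    intro η g
    set s : Set κ.ord.ToType :=
      ⋃ p : {η' // η' < η}, insert (g p.1 p.2) (m '' Iic (g p.1 p.2)) with hsdef
    have hs : #s < κ := by
      refine lt_of_le_of_lt Cardinal.mk_iUnion_le_sum_mk ?_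
      refine Cardinal.sum_lt_of_isRegular hreg
        (lt_of_eq_of_lt (rfl : #{η' // η' < η} = #(Iio η)) (Cardinal.mk_Iio_ord_toType η)) ?_
      intro p
      calc #(insert (g p.1 p.2) (m '' Iic (g p.1 p.2)) : Set κ.ord.ToType)
          ≤ #(m '' Iic (g p.1 p.2)) + 1 := Cardinal.mk_insert_le
        _ < κ := Cardinal.add_lt_of_lt hκ.le
            (lt_of_le_of_lt Cardinal.mk_image_le (mk_Iic_lt hκ _))
            (lt_trans Cardinal.one_lt_aleph0 hκ)
    obtain ⟨b, hb⟩ := bddOf hκ hreg s hs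
    refine ⟨succb hκ b, ?_⟩
    intro η' h
    constructor
    · exact lt_of_le_of_lt (hb _ (mem_iUnion.2 ⟨⟨η', h⟩, mem_insert _ _⟩)) (lt_succb hκ b)
    · intro ζ hζ
      exact lt_of_le_of_lt
        (hb _ (mem_iUnion.2 ⟨⟨η', h⟩, mem_insert_of_mem _ ⟨ζ, hζ, rfl⟩⟩)) (lt_succb hκ b)
  set c : κ.ord.ToType → κ.ord.ToType :=
    wf.fix (fun η g => wfmin _ (hne η g)) with hcdef
  have hceq : ∀ η, c η = wfmin _ (hne η (fun η' _ => c η')) := by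
    intro η
    rw [hcdef]
    rw [WellFounded.fix_eq]
  have hmem : ∀ η, ∀ η' (h : η' < η), c η' < c η ∧ ∀ ζ ≤ c η', m ζ < c η := by
    intro η
    have := wfmin_mem _ (hne η (fun η' _ => c η'))
    rw [← hceq η] at this
    exact this
  refine ⟨c, fun {η' η} h => (hmem η η' h).1, fun {η' η ζ} h hζ => (hmem η η' h).2 ζ hζ, ?_⟩
  intro η γ hγ
  rw [hceq η]
  exact wfmin_le _ _ (fun η' h => hγ η' h)

variable (hκ : ℵ₀ < κ) {m c : κ.ord.ToType → κ.ord.ToType}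
variable (hc1 : ∀ {η' η}, η' < η → c η' < c η)
variable (hc2 : ∀ {η' η ζ}, η' < η → ζ ≤ c η' → m ζ < c η)
variable (hc3 : ∀ η γ, (∀ η', η' < η → c η' < γ ∧ ∀ ζ ≤ c η', m ζ < γ) → c η ≤ γ)

include hc1 in
lemma le_c : ∀ η, η ≤ c η := by
  intro η
  induction η using WellFoundedLT.induction with
  | ind η IH =>
    by_contra h
    push_neg at h
    have h1 : c η ≤ c (c η) := IH (c η) h
    have h2 : c (c η) < c η := hc1 h
    exact absurd (h1.trans_lt h2) (lt_irrefl _)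

include hc1 in
lemma lt_c_succb (γ : κ.ord.ToType) : γ < c (succb hκ γ) :=
  lt_of_le_of_lt (le_c hc1 γ) (hc1 (lt_succb hκ γ))

noncomputable def blf (γ : κ.ord.ToType) : κ.ord.ToType :=
  wfmin {η | γ < c (succb hκ η)} ⟨γ, lt_c_succb hκ hc1 γ⟩

lemma blf_lt (γ : κ.ord.ToType) : γ < c (succb hκ (blf hκ hc1 γ)) :=
  wfmin_mem {η | γ < c (succb hκ η)} ⟨γ, lt_c_succb hκ hc1 γ⟩

lemma blf_min {γ η : κ.ord.ToType} (h : γ < c (succb hκ η)) : blf hκ hc1 γ ≤ η :=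
  wfmin_le {η' | γ < c (succb hκ η')} ⟨γ, lt_c_succb hκ hc1 γ⟩ h

include hc2 hc3 in
lemma c_blf_le (γ : κ.ord.ToType) : c (blf hκ hc1 γ) ≤ γ := by
  refine hc3 _ _ ?_
  intro η' h
  have h1 : c (succb hκ η') ≤ γ := by
    by_contra hcon
    push_neg at hcon
    exact absurd (blf_min hκ hc1 hcon) (not_le.2 h)
  exact ⟨lt_of_lt_of_le (hc1 (lt_succb hκ η')) h1,
    fun ζ hζ => lt_of_lt_of_le (hc2 (lt_succb hκ η') hζ) h1⟩

include hc1 in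
lemma blf_mono {ξ γ : κ.ord.ToType} (h : ξ ≤ γ) : blf hκ hc1 ξ ≤ blf hκ hc1 γ :=
  blf_min hκ hc1 (lt_of_le_of_lt h (blf_lt hκ hc1 γ))

include hc1 in
lemma blf_c (η : κ.ord.ToType) : blf hκ hc1 (c η) = η := by
  have h1 : blf hκ hc1 (c η) ≤ η := blf_min hκ hc1 (hc1 (lt_succb hκ η))
  have h2 : η ≤ blf hκ hc1 (c η) := by
    by_contra h
    push_neg at h
    have : c (succb hκ (blf hκ hc1 (c η))) ≤ c η := by
      rcases lt_or_eq_of_le (succb_le hκ h) with h' | h'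
      · exact le_of_lt (hc1 h')
      · rw [h']
    exact absurd (lt_of_lt_of_le (blf_lt hκ hc1 (c η)) this) (lt_irrefl _)
  exact le_antisymm h1 h2

include hc2 hc3 in
lemma gapKey {ξ γ : κ.ord.ToType} (h : ξ ≤ γ)
    (h1 : blf hκ hc1 γ ≠ blf hκ hc1 ξ)
    (h2 : blf hκ hc1 γ ≠ succb hκ (blf hκ hc1 ξ)) : m ξ < γ := by
  have hmono : blf hκ hc1 ξ ≤ blf hκ hc1 γ := blf_mono hκ hc1 h
  have hgt : succb hκ (succb hκ (blf hκ hc1 ξ)) ≤ blf hκ hc1 γ := by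
    have ha : blf hκ hc1 ξ < blf hκ hc1 γ := lt_of_le_of_ne hmono (Ne.symm h1)
    have hb : succb hκ (blf hκ hc1 ξ) ≤ blf hκ hc1 γ := succb_le hκ ha
    exact succb_le hκ (lt_of_le_of_ne hb (Ne.symm h2))
  have hkey : m ξ < c (succb hκ (succb hκ (blf hκ hc1 ξ))) :=
    hc2 (lt_succb hκ _) (le_of_lt (blf_lt hκ hc1 ξ))
  calc m ξ < c (succb hκ (succb hκ (blf hκ hc1 ξ))) := hkey
    _ ≤ c (blf hκ hc1 γ) := by
        rcases lt_or_eq_of_le hgt with h' | h'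
        · exact le_of_lt (hc1 h')
        · rw [h']
    _ ≤ γ := c_blf_le hκ hc1 hc2 hc3 γ

end closure
section rho
open Fin.NatCast Fin.CommRing
variable {κ : Cardinal.{0}}

lemma existsRho (hκ : ℵ₀ < κ) :
    ∃ ρ : κ.ord.ToType → Fin 5, ∀ η, ρ (succb hκ η) = ρ η + 1 := by
  classical
  have wf : WellFounded ((· < ·) : κ.ord.ToType → κ.ord.ToType → Prop) :=
    IsWellFounded.wf
  have hlt : ∀ {η' η : κ.ord.ToType}, succb hκ η' = η → η' < η := by
    intro η' η h
    rw [← h]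
    exact lt_succb hκ η'
  set ρ : κ.ord.ToType → Fin 5 := wf.fix (fun η g =>
    if h : ∃ η', succb hκ η' = η then g h.choose (hlt h.choose_spec) + 1 else 0) with hρdef
  have hρeq : ∀ η, ρ η =
      if h : ∃ η', succb hκ η' = η then ρ h.choose + 1 else 0 := by
    intro η
    rw [hρdef]
    rw [WellFounded.fix_eq]
  refine ⟨ρ, ?_⟩
  intro η
  have h : ∃ η', succb hκ η' = succb hκ η := ⟨η, rfl⟩
  have hch : h.choose = η := (succb_strictMono hκ).injective h.choose_spec
  rw [hρeq (succb hκ η), dif_pos h, hch]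

variable (hκ : ℵ₀ < κ) {m c : κ.ord.ToType → κ.ord.ToType}
variable (hc1 : ∀ {η' η}, η' < η → c η' < c η)
variable {ρ : κ.ord.ToType → Fin 5} (hρ : ∀ η, ρ (succb hκ η) = ρ η + 1)

include hρ in
lemma rho_iter : ∀ (k : ℕ) (η : κ.ord.ToType),
    ρ ((succb hκ)^[k] η) = ρ η + (k : Fin 5) ∧ η ≤ (succb hκ)^[k] η := by
  intro k
  induction k with
  | zero => intro η; simp
  | succ n IH =>
    intro η
    constructor
    · rw [Function.iterate_succ_apply', hρ, (IH η).1]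
      push_cast
      ring
    · rw [Function.iterate_succ_apply']
      exact le_trans (IH η).2 (le_of_lt (lt_succb hκ _))

include hc1 hρ in
lemma resUnbounded (b : κ.ord.ToType) (r : Fin 5) :
    ∃ ξ, b < ξ ∧ ρ (blf hκ hc1 ξ) = r := by
  set η₀ : κ.ord.ToType := succb hκ (blf hκ hc1 b) with hη₀
  set k : ℕ := (r - ρ η₀).val with hk
  set η : κ.ord.ToType := (succb hκ)^[k] η₀ with hη
  refine ⟨c η, ?_, ?_⟩
  · have h1 : b < c η₀ := blf_lt hκ hc1 b
    have h2 : c η₀ ≤ c η := by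
      rcases lt_or_eq_of_le (rho_iter hκ hρ k η₀).2 with h | h
      · exact le_of_lt (hc1 (show η₀ < η from h))
      · exact le_of_eq (congrArg c h)
    exact lt_of_lt_of_le h1 h2
  · rw [blf_c hκ hc1 η]
    rw [hη, (rho_iter hκ hρ k η₀).1, hk, Fin.cast_val_eq_self]
    ring

end rho

section classpick
variable {κ : Cardinal.{0}}

lemma classPick (V : Ultrafilter κ.ord.ToType) (φ : κ.ord.ToType → Fin 5) :
    ∃ r : Fin 5, {x | φ x = r} ∈ V := by
  by_contra h
  push_neg at h
  have hc : ∀ r : Fin 5, {x | φ x = r}ᶜ ∈ V :=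
    fun r => Ultrafilter.compl_mem_iff_notMem.2 (h r)
  have hint : ({x | φ x = 0}ᶜ ∩ ({x | φ x = 1}ᶜ ∩ ({x | φ x = 2}ᶜ ∩
      ({x | φ x = 3}ᶜ ∩ {x | φ x = 4}ᶜ)))) ∈ V :=
    Filter.inter_mem (hc 0) (Filter.inter_mem (hc 1)
      (Filter.inter_mem (hc 2) (Filter.inter_mem (hc 3) (hc 4))))
  obtain ⟨x, hx0, hx1, hx2, hx3, hx4⟩ := Ultrafilter.nonempty_of_mem hint
  have : ∀ v : Fin 5, v = 0 ∨ v = 1 ∨ v = 2 ∨ v = 3 ∨ v = 4 := by decide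
  rcases this (φ x) with h' | h' | h' | h' | h' <;>
    simp_all [Set.mem_compl_iff, Set.mem_setOf_eq]

lemma residueSelect : ∀ j k : Fin 5, ∃ r : Fin 5,
    r ≠ j ∧ r + 1 ≠ j ∧ r ≠ k ∧ r + 1 ≠ k := by decide

end classpick
section counting
variable {κ : Cardinal.{0}}

lemma pigeon {ι J : Type} (F : ι → J) (hι : κ < #ι) (hκ : ℵ₀ < κ)
    (hr : #(range F) ≤ κ) : ∃ j, κ < #(F ⁻¹' {j}) := by
  by_contra h
  push_neg at h
  have hF' : ∀ b : ↥(range F), #((Set.rangeFactorization F) ⁻¹' {b}) ≤ κ := by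
    intro b
    have : (Set.rangeFactorization F) ⁻¹' {b} = F ⁻¹' {(b : J)} := by
      ext x
      simp [Set.rangeFactorization, Subtype.ext_iff]
    rw [this]
    exact h _
  have h1 : #ι ≤ #(range F) * κ :=
    Cardinal.mk_le_mk_mul_of_mk_preimage_le (Set.rangeFactorization F) hF'
  have h2 : #(range F) * κ ≤ κ * κ := mul_le_mul_left hr κ
  rw [Cardinal.mul_eq_self hκ.le] at h2
  exact absurd (hι.trans_le (h1.trans h2)) (lt_irrefl _)

lemma rangeSmall (hκ : ℵ₀ < κ) (hpow : κ ^< κ = κ) (hreg : κ.IsRegular) {ι : Type}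
    (α : ι → κ.ord.ToType) (S : ι → Set (κ.ord.ToType × κ.ord.ToType))
    (T : ι → Set κ.ord.ToType)
    (hS : ∀ i, S i ⊆ (Iio (α i)) ×ˢ (Iio (α i))) (hT : ∀ i, T i ⊆ Iio (α i)) :
    #(range fun i => (α i, S i, T i)) ≤ κ := by
  have hsub : (range fun i => (α i, S i, T i)) ⊆
      ⋃ a : κ.ord.ToType, ({a} ×ˢ ((𝒫 ((Iio a) ×ˢ (Iio a))) ×ˢ (𝒫 (Iio a)))) := by
    rintro p ⟨i, rfl⟩
    exact mem_iUnion.2 ⟨α i, rfl, hS i, hT i⟩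
  refine le_trans (Cardinal.mk_le_mk_of_subset hsub) ?_
  refine le_trans Cardinal.mk_iUnion_le_sum_mk ?_
  have hbound : ∀ a : κ.ord.ToType,
      #(({a} ×ˢ ((𝒫 ((Iio a) ×ˢ (Iio a))) ×ˢ (𝒫 (Iio a)))) :
          Set (κ.ord.ToType × Set (κ.ord.ToType × κ.ord.ToType) × Set κ.ord.ToType)) ≤ κ := by
    intro a
    rw [Cardinal.mk_setProd, Cardinal.mk_setProd, Cardinal.mk_singleton, one_mul]
    have hIio : #(Iio a) < κ := Cardinal.mk_Iio_ord_toType a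
    have h1 : #(𝒫 ((Iio a) ×ˢ (Iio a)) : Set (Set (κ.ord.ToType × κ.ord.ToType))) ≤ κ := by
      rw [Cardinal.mk_powerset, Cardinal.mk_setProd]
      exact two_pow_le hκ hpow (Cardinal.mul_lt_of_lt hκ.le hIio hIio)
    have h2 : #(𝒫 (Iio a) : Set (Set κ.ord.ToType)) ≤ κ := by
      rw [Cardinal.mk_powerset]
      exact two_pow_le hκ hpow hIio
    calc #(𝒫 ((Iio a) ×ˢ (Iio a)) : Set (Set (κ.ord.ToType × κ.ord.ToType))) *
          #(𝒫 (Iio a) : Set (Set κ.ord.ToType)) ≤ κ * κ := mul_le_mul' h1 h2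
      _ = κ := Cardinal.mul_eq_self hκ.le
  calc (Cardinal.sum fun a : κ.ord.ToType =>
        #(({a} ×ˢ ((𝒫 ((Iio a) ×ˢ (Iio a))) ×ˢ (𝒫 (Iio a)))) :
          Set (κ.ord.ToType × Set (κ.ord.ToType × κ.ord.ToType) × Set κ.ord.ToType)))
      ≤ Cardinal.sum (fun _ : κ.ord.ToType => κ) := Cardinal.sum_le_sum _ _ hbound
    _ = #(κ.ord.ToType) * κ := Cardinal.sum_const' _ _
    _ = κ * κ := by rw [Cardinal.mk_ord_toType]
    _ = κ := Cardinal.mul_eq_self hκ.le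

end counting
lemma mem_sumUf {α β : Type} {U : Ultrafilter α} {Us : α → Ultrafilter β}
    {S : Set (α × β)} : S ∈ sumUf U Us ↔ {a | (Prod.mk a) ⁻¹' S ∈ Us a} ∈ U :=
  Iff.rfl


/-- suppose `κ` is a measurable cardinal with `κ^{<κ} = κ`, and
`W ≡_RK ∑_U U_α`, where `U` and all the `U_α` (`α < κ`) are `κ`-complete p-point
ultrafilters over `κ`.  Then `W` satisfies the Galvin property `Gal(W, κ, κ⁺)`. -/
theorem stmt5 (κ : Cardinal.{0}) (hκ : ℵ₀ < κ) (hpow : κ ^< κ = κ)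
    (U : Ultrafilter κ.ord.ToType) (hUcc : CComplete κ U) (hUpp : IsPPoint U)
    (hUnp : ∀ x, U ≠ (pure x : Ultrafilter _))
    (Us : κ.ord.ToType → Ultrafilter κ.ord.ToType)
    (hUscc : ∀ a, CComplete κ (Us a)) (hUspp : ∀ a, IsPPoint (Us a))
    (hUsnp : ∀ a x, Us a ≠ (pure x : Ultrafilter _))
    (W : Ultrafilter κ.ord.ToType) (hRK : RKequiv W (sumUf U Us)) :
    Gal W κ (Order.succ κ) := by
  classical
  intro A hA
  have hreg : κ.IsRegular := reg_of_powerlt hκ hpow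
  obtain ⟨g, hg⟩ := hRK.1
  have hmemW : ∀ s, s ∈ W ↔ g ⁻¹' s ∈ sumUf U Us := by
    intro s; rw [hg]; exact Ultrafilter.mem_map
  set A' : (Order.succ κ).ord.ToType → Set (κ.ord.ToType × κ.ord.ToType) :=
    fun i => g ⁻¹' (A i) with hA'def
  have hA' : ∀ i, A' i ∈ sumUf U Us := fun i => (hmemW (A i)).1 (hA i)
  set Xs : (Order.succ κ).ord.ToType → Set κ.ord.ToType :=
    fun i => {a | (Prod.mk a) ⁻¹' (A' i) ∈ Us a} with hXsdef
  have hXs : ∀ i, Xs i ∈ U := fun i => mem_sumUf.1 (hA' i)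
  set sq : κ.ord.ToType → Set (κ.ord.ToType × κ.ord.ToType) :=
    fun α => (Iio α) ×ˢ (Iio α) with hsqdef
  set K : (Order.succ κ).ord.ToType → κ.ord.ToType → Set ((Order.succ κ).ord.ToType) :=
    fun i α => {j | A' i ∩ sq α ⊆ A' j ∧ Xs i ∩ Iio α ⊆ Xs j} with hKdef
  have hκι : κ < #((Order.succ κ).ord.ToType) := by
    rw [Cardinal.mk_ord_toType]
    exact Order.lt_succ κ
  -- pigeonhole: a good index i⋆
  have hstar : ∃ istar, ∀ α, κ < #(K istar α) := by
    by_contra h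
    push_neg at h
    choose αf hαf using h
    set F : (Order.succ κ).ord.ToType →
        κ.ord.ToType × Set (κ.ord.ToType × κ.ord.ToType) × Set κ.ord.ToType :=
      fun i => (αf i, A' i ∩ sq (αf i), Xs i ∩ Iio (αf i)) with hFdef
    have hrange : #(range F) ≤ κ := by
      refine rangeSmall hκ hpow hreg αf (fun i => A' i ∩ sq (αf i))
        (fun i => Xs i ∩ Iio (αf i)) (fun i => inter_subset_right) (fun i => inter_subset_right)
    obtain ⟨j, hj⟩ := pigeon F hκι hκ hrange
    have hne : (F ⁻¹' {j}).Nonempty := by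
      rw [← Set.nonempty_coe_sort, ← Cardinal.mk_ne_zero_iff]
      intro h0
      rw [h0] at hj
      exact absurd (lt_trans (Cardinal.aleph0_pos.trans hκ) hj) (lt_irrefl _)
    obtain ⟨i₀, hi₀⟩ := hne
    have hsub : F ⁻¹' {j} ⊆ K i₀ (αf i₀) := by
      intro j' hj'
      have hFeq : F j' = F i₀ := by
        rw [show F j' = j from hj', show F i₀ = j from hi₀]
      rw [hFdef] at hFeq
      simp only [Prod.mk.injEq] at hFeq
      obtain ⟨hα, hS, hT⟩ := hFeq
      constructor
      · rw [← hS]; exact inter_subset_left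
      · rw [← hT]; exact inter_subset_left
    exact absurd (lt_of_lt_of_le hj (Cardinal.mk_le_mk_of_subset hsub)) (not_lt.2 (hαf i₀))
  obtain ⟨istar, histar⟩ := hstar
  -- choose injective selection
  obtain ⟨i, hiK, hiInj⟩ := sdr hκ (K istar) histar
  have hBsq : ∀ ξ, A' istar ∩ sq ξ ⊆ A' (i ξ) := fun ξ => (hiK ξ).1
  have hXBsub : ∀ ξ, Xs istar ∩ Iio ξ ⊆ Xs (i ξ) := fun ξ => (hiK ξ).2
  -- U-side pseudo-intersection
  obtain ⟨XU, hXU, u, hu⟩ := ppL hκ hUpp hUnp (fun ξ => Xs (i ξ)) (fun ξ => hXs (i ξ))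
  -- column-wise pseudo-intersections
  have hcol : ∀ a : κ.ord.ToType, ∃ Z ∈ Us a, ∃ w : κ.ord.ToType → κ.ord.ToType,
      ∀ ξ, ∀ b ∈ Z,
        b ∉ (if a ∈ Xs (i ξ) then (Prod.mk a) ⁻¹' (A' (i ξ)) else univ) → b ≤ w ξ := by
    intro a
    refine ppL hκ (hUspp a) (hUsnp a) _ ?_
    intro ξ
    by_cases h : a ∈ Xs (i ξ)
    · rw [if_pos h]; exact h
    · rw [if_neg h]; exact Filter.univ_mem
  choose Z hZ w hw using hcol
  -- master bound m
  have hmex : ∀ ξ : κ.ord.ToType, ∃ mξ, u ξ ≤ mξ ∧ ∀ a ≤ ξ, w a ξ ≤ mξ := by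
    intro ξ
    obtain ⟨b0, hb0⟩ := bddOf hκ hreg (insert (u ξ) ((fun a => w a ξ) '' Iic ξ))
      (lt_of_le_of_lt Cardinal.mk_insert_le
        (Cardinal.add_lt_of_lt hκ.le (lt_of_le_of_lt Cardinal.mk_image_le (mk_Iic_lt hκ ξ))
          (lt_trans Cardinal.one_lt_aleph0 hκ)))
    exact ⟨b0, hb0 _ (mem_insert _ _),
      fun a ha => hb0 _ (mem_insert_of_mem _ ⟨a, ha, rfl⟩)⟩
  choose m hm1 hm2 using hmex
  -- closure function and blocks
  obtain ⟨c, hc1, hc2, hc3⟩ := existsC hκ hreg m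
  obtain ⟨ρ, hρ⟩ := existsRho hκ
  -- residues
  obtain ⟨jU, hjU⟩ := classPick U (fun a => ρ (blf hκ hc1 a))
  have hkaex : ∀ a : κ.ord.ToType, ∃ k, {b | ρ (blf hκ hc1 b) = k} ∈ Us a :=
    fun a => classPick (Us a) _
  choose ka hka using hkaex
  obtain ⟨kstar, hkstar⟩ := classPick U ka
  obtain ⟨r, hr1, hr2, hr3, hr4⟩ := residueSelect jU kstar
  set T : Set κ.ord.ToType := {ξ | ρ (blf hκ hc1 ξ) = r} with hTdef
  -- per-column tail bound
  have hWaex : ∀ a : κ.ord.ToType, ∃ Wa, ∀ ξ ≤ a, w a ξ ≤ Wa := by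
    intro a
    obtain ⟨b0, hb0⟩ := bddOf hκ hreg ((fun ξ => w a ξ) '' Iic a)
      (lt_of_le_of_lt Cardinal.mk_image_le (mk_Iic_lt hκ a))
    exact ⟨b0, fun ξ hξ => hb0 _ ⟨ξ, hξ, rfl⟩⟩
  choose Wa hWa using hWaex
  -- the large sets
  set Xstar : Set κ.ord.ToType :=
    XU ∩ Xs istar ∩ {a | ρ (blf hκ hc1 a) = jU} ∩ {a | ka a = kstar} with hXstardef
  have hXstar : Xstar ∈ U :=
    Filter.inter_mem (Filter.inter_mem (Filter.inter_mem hXU (hXs istar)) hjU) hkstar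
  set Zstar : κ.ord.ToType → Set κ.ord.ToType := fun a =>
    Z a ∩ (Prod.mk a) ⁻¹' (A' istar) ∩ {b | ρ (blf hκ hc1 b) = ka a} ∩ {b | Wa a < b}
    with hZstardef
  have hZstar : ∀ a ∈ Xstar, Zstar a ∈ Us a := by
    intro a ha
    have haXB : a ∈ Xs istar := ha.1.1.2
    have htail : {b | Wa a < b} ∈ Us a := by
      have : (Iic (Wa a))ᶜ ∈ Us a :=
        nullOfSmall (hUscc a) (hUsnp a) _ (mk_Iic_lt hκ (Wa a))
      have heq : (Iic (Wa a))ᶜ = {b | Wa a < b} := by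
        ext b; simp [not_le]
      rwa [heq] at this
    exact Filter.inter_mem (Filter.inter_mem (Filter.inter_mem (hZ a) haXB) (hka a)) htail
  set G : Set (κ.ord.ToType × κ.ord.ToType) :=
    {p | p.1 ∈ Xstar ∧ p.2 ∈ Zstar p.1} with hGdef
  have hG : G ∈ sumUf U Us := by
    rw [mem_sumUf]
    refine Filter.mem_of_superset hXstar ?_
    intro a ha
    have heq : (Prod.mk a) ⁻¹' G = Zstar a := by
      ext b
      simp only [hGdef, mem_preimage, mem_setOf_eq]
      exact ⟨fun h => h.2, fun h => ⟨ha, h⟩⟩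
    show (Prod.mk a) ⁻¹' G ∈ Us a
    rw [heq]
    exact hZstar a ha
  -- size of T
  have hTκ : #T = κ := by
    refine le_antisymm (le_of_le_of_eq (Cardinal.mk_set_le T) (Cardinal.mk_ord_toType κ)) ?_
    by_contra h
    push_neg at h
    obtain ⟨b, hb⟩ := bddOf hκ hreg T h
    obtain ⟨ξ, hξ1, hξ2⟩ := resUnbounded hκ hc1 hρ b r
    exact absurd (hb ξ hξ2) (not_le.2 hξ1)
  set I : Set ((Order.succ κ).ord.ToType) := i '' T with hIdef
  have hIκ : #I = κ := by
    rw [hIdef, Cardinal.mk_image_eq hiInj]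
    exact hTκ
  -- the key inclusion
  have hkey : G ⊆ ⋂ ξ ∈ T, A' (i ξ) := by
    rintro ⟨a, b⟩ ⟨haX, hbZ⟩
    refine mem_iInter₂.2 ?_
    intro ξ hξT
    have haXU : a ∈ XU := haX.1.1.1
    have haXB : a ∈ Xs istar := haX.1.1.2
    have haρ : ρ (blf hκ hc1 a) = jU := haX.1.2
    have haka : ka a = kstar := haX.2
    have hbZ0 : b ∈ Z a := hbZ.1.1.1
    have hbB : (a, b) ∈ A' istar := hbZ.1.1.2
    have hbρ : ρ (blf hκ hc1 b) = ka a := hbZ.1.2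
    have hbW : Wa a < b := hbZ.2
    have hξρ : ρ (blf hκ hc1 ξ) = r := hξT
    by_cases hcase1 : ξ ≤ a
    · -- ξ ≤ a
      have hne1 : blf hκ hc1 a ≠ blf hκ hc1 ξ := by
        intro heq
        rw [heq, hξρ] at haρ
        exact hr1 haρ
      have hne2 : blf hκ hc1 a ≠ succb hκ (blf hκ hc1 ξ) := by
        intro heq
        rw [heq, hρ, hξρ] at haρ
        exact hr2 haρ
      have hma : m ξ < a := gapKey hκ hc1 hc2 hc3 hcase1 hne1 hne2
      have haXs : a ∈ Xs (i ξ) := by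
        by_contra h
        exact absurd (lt_of_le_of_lt (le_trans (hu ξ a haXU h) (hm1 ξ)) hma) (lt_irrefl a)
      by_contra hnot
      have h2 : b ∉ (if a ∈ Xs (i ξ) then (Prod.mk a) ⁻¹' (A' (i ξ)) else univ) := by
        rw [if_pos haXs]
        exact hnot
      have h3 : b ≤ w a ξ := hw a ξ b hbZ0 h2
      exact absurd (lt_of_le_of_lt (le_trans h3 (hWa a ξ hcase1)) hbW) (lt_irrefl b)
    · push_neg at hcase1
      have haXs : a ∈ Xs (i ξ) := hXBsub ξ ⟨haXB, hcase1⟩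
      by_cases hcase2 : ξ ≤ b
      · -- a < ξ ≤ b
        have hne1 : blf hκ hc1 b ≠ blf hκ hc1 ξ := by
          intro heq
          rw [heq, hξρ] at hbρ
          rw [haka] at hbρ
          exact hr3 hbρ
        have hne2 : blf hκ hc1 b ≠ succb hκ (blf hκ hc1 ξ) := by
          intro heq
          rw [heq, hρ, hξρ] at hbρ
          rw [haka] at hbρ
          exact hr4 hbρ
        have hmb : m ξ < b := gapKey hκ hc1 hc2 hc3 hcase2 hne1 hne2
        by_contra hnot
        have h2 : b ∉ (if a ∈ Xs (i ξ) then (Prod.mk a) ⁻¹' (A' (i ξ)) else univ) := by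
          rw [if_pos haXs]
          exact hnot
        have h3 : b ≤ w a ξ := hw a ξ b hbZ0 h2
        exact absurd (lt_of_le_of_lt (le_trans h3 (hm2 ξ a (le_of_lt hcase1))) hmb)
          (lt_irrefl b)
      · -- a < ξ, b < ξ
        push_neg at hcase2
        refine hBsq ξ ⟨hbB, ?_⟩
        exact ⟨hcase1, hcase2⟩
  refine ⟨I, hIκ, ?_⟩
  rw [hmemW]
  have hpre : g ⁻¹' (⋂ j ∈ I, A j) = ⋂ j ∈ I, A' j := by
    rw [preimage_iInter₂]
  rw [hpre, hIdef, biInter_image]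
  exact Filter.mem_of_superset hG hkey
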